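/- Let G be a minimal counterexample to the statement that all planar graphs have 3-weak-dynamic number at most 6, chosen with the fewest edges and, among those, the fewest vertices. Then G does not contain a triangle with vertices v_1, v_2, v_3 where d(v_1) = d(v_2) = d(v_3) = 3. -/

import Mathlib

open SimpleGraph

/-- `H` is a minor of `G`: there are nonempty, connected, pairwise disjoint branch sets
in `G`, with an edge of `G` between the branch sets of any two adjacent vertices of `H`. -/
def HasMinor {V W : Type} (G : SimpleGraph V) (H : SimpleGraph W) : Prop :=
  ∃ f : W → Set V,
    (∀ w, (f w).Nonempty) ∧
    (∀ w, (G.induce (f w)).Connected) ∧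
    (∀ w w', w ≠ w' → Disjoint (f w) (f w')) ∧
    (∀ w w', H.Adj w w' → ∃ a ∈ f w, ∃ b ∈ f w', G.Adj a b)

/-- A graph is planar iff it has no `K₅` minor and no `K_{3,3}` minor (Wagner's theorem). -/
def IsPlanar {V : Type} (G : SimpleGraph V) : Prop :=
  ¬ HasMinor G (⊤ : SimpleGraph (Fin 5)) ∧
  ¬ HasMinor G (completeBipartiteGraph (Fin 3) (Fin 3))

/-- The degree of a vertex `v`, the number of its neighbors. -/
noncomputable def deg {V : Type} (G : SimpleGraph V) (v : V) : ℕ :=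
  (G.neighborSet v).ncard

/-- `G` admits a `k`-weak-dynamic coloring with `n` colors: a (not necessarily proper)
coloring such that every vertex `v` sees at least `min k (d v)` colors on its neighborhood. -/
def WDColorable {V : Type} (G : SimpleGraph V) (k n : ℕ) : Prop :=
  ∃ c : V → Fin n, ∀ v, min k (deg G v) ≤ (c '' G.neighborSet v).ncard

/-!
Delete the edges at the triangle `v₁v₂v₃`. The smaller graph is planar, so it has a
3-weak-dynamic coloring `c` with 6 colors, and only the colors `xᵢ` of the `vᵢ` remain to be
chosen. Let `uᵢ` be the neighbor of `vᵢ` outside the triangle. The vertex `vᵢ` needs `c uᵢ` and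
the two other `xⱼ` to be distinct. A vertex `u` that sees fewer than 3 colors on its remaining
neighbors sees them on distinct neighbors, so new neighbors of `u` help as soon as their colors
are distinct and new to `u`. Hence each `xᵢ` has to avoid at most four colors, and Hall's
condition for distinct `xᵢ` fails only if the three sets of admissible colors are one and the
same pair `P`. Then the `uᵢ` carry distinct colors and `u₃` has just two other neighbors, so
`u₃` can be recolored without harming them; `v₁` takes the old color of `u₃`, and `v₂`, `v₃`
share out `P`.
-/

variable {V W : Type} {α ι : Type*}

theorem HasMinor.mono {G G' : SimpleGraph V} {K : SimpleGraph W} (hle : G ≤ G')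
    (h : HasMinor G K) : HasMinor G' K := by
  obtain ⟨f, hne, hconn, hdisj, hadj⟩ := h
  refine ⟨f, hne, fun w ↦ (hconn w).mono fun _ _ hab ↦ hle hab, hdisj, fun w w' h ↦ ?_⟩
  obtain ⟨a, ha, b, hb, hab⟩ := hadj w w' h
  exact ⟨a, ha, b, hb, hle hab⟩

theorem IsPlanar.anti {G G' : SimpleGraph V} (hle : G ≤ G') (h : IsPlanar G') : IsPlanar G :=
  ⟨fun hm ↦ h.1 (hm.mono hle), fun hm ↦ h.2 (hm.mono hle)⟩

def IsWDColoring (G : SimpleGraph V) (k : ℕ) (c : V → α) : Prop :=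
  ∀ v, min k (deg G v) ≤ (c '' G.neighborSet v).ncard

namespace SimpleGraph

def isolate (G : SimpleGraph V) (T : Set V) : SimpleGraph V where
  Adj a b := G.Adj a b ∧ a ∉ T ∧ b ∉ T
  symm := ⟨fun _ _ h ↦ ⟨h.1.symm, h.2.2, h.2.1⟩⟩
  loopless := ⟨fun a h ↦ G.loopless.irrefl a h.1⟩

variable {G : SimpleGraph V} {T : Set V}

theorem isolate_le : G.isolate T ≤ G := fun _ _ h ↦ h.1

theorem isolate_empty (G : SimpleGraph V) : G.isolate ∅ = G := by
  ext a b
  simp [isolate]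

theorem neighborSet_isolate {w : V} (hw : w ∉ T) :
    (G.isolate T).neighborSet w = G.neighborSet w \ T := by
  ext x
  simp [isolate, hw]

theorem ncard_edgeSet_isolate_lt [Finite V] {a b : V} (hab : G.Adj a b) (ha : a ∈ T) :
    (G.isolate T).edgeSet.ncard < G.edgeSet.ncard := by
  refine Set.ncard_lt_ncard ((edgeSet_mono isolate_le).ssubset_of_ne fun h ↦ ?_)
  have : s(a, b) ∈ (G.isolate T).edgeSet := h ▸ hab
  exact this.2.1 ha

theorem exists_neighborSet_eq_of_deg_eq_three [Finite V] {v a b : V} (hd : deg G v = 3)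
    (ha : G.Adj v a) (hb : G.Adj v b) (hab : a ≠ b) :
    ∃ u, u ≠ a ∧ u ≠ b ∧ G.neighborSet v = {a, b, u} := by
  obtain ⟨u, hu, hu'⟩ := Set.exists_mem_notMem_of_ncard_lt_ncard
    (show ({a, b} : Set V).ncard < (G.neighborSet v).ncard by
      rw [Set.ncard_pair hab]; exact (show 2 < 3 by norm_num).trans_eq hd.symm)
  simp only [Set.mem_insert_iff, Set.mem_singleton_iff, not_or] at hu'
  refine ⟨u, hu'.1, hu'.2, (Set.eq_of_subset_of_ncard_le ?_ ?_).symm⟩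
  · exact Set.insert_subset ha (Set.insert_subset hb (Set.singleton_subset_iff.2 hu))
  · rw [← deg, hd, Set.ncard_eq_three.2 ⟨a, b, u, hab, Ne.symm hu'.1, Ne.symm hu'.2, rfl⟩]

theorem min_le_ncard_image_of_neighborSet_eq {c : V → α} {v a b u : V}
    (hN : G.neighborSet v = {a, b, u}) (hab : c a ≠ c b) (hau : c a ≠ c u) (hbu : c b ≠ c u) :
    min 3 (deg G v) ≤ (c '' G.neighborSet v).ncard := by
  rw [hN, Set.image_insert_eq, Set.image_insert_eq, Set.image_singleton,
    Set.ncard_eq_three.2 ⟨_, _, _, hab, hau, hbu, rfl⟩]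
  exact min_le_left _ _

end SimpleGraph

def blockedColors (k : ℕ) (S : Set α) : Set α :=
  if k ≤ S.ncard then ∅ else S

theorem ncard_blockedColors_le (k : ℕ) (S : Set α) : (blockedColors k S).ncard ≤ k - 1 := by
  unfold blockedColors
  split_ifs with h
  · simp
  · omega

theorem ncard_lt_of_blockedColors_nonempty {k : ℕ} {S : Set α}
    (h : (blockedColors k S).Nonempty) : S.ncard < k := by
  unfold blockedColors at h
  split_ifs at h with hk
  · simp at h
  · omega

theorem mem_blockedColors_of_nonempty {k : ℕ} {S : Set α} {x : α}
    (h : (blockedColors k S).Nonempty) (hx : x ∈ S) : x ∈ blockedColors k S := by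
  unfold blockedColors at h ⊢
  split_ifs at h ⊢
  · simp at h
  · exact hx

theorem min_le_ncard_union_of_disjoint_blockedColors {k : ℕ} {S X : Set α}
    (h : Disjoint X (blockedColors k S)) (hS : S.Finite := by toFinite_tac)
    (hX : X.Finite := by toFinite_tac) :
    min k (S.ncard + X.ncard) ≤ (S ∪ X).ncard := by
  unfold blockedColors at h
  split_ifs at h with hk
  · exact (min_le_left _ _).trans
      (hk.trans (Set.ncard_le_ncard Set.subset_union_left (hS.union hX)))
  · rw [Set.ncard_union_eq h.symm hS hX]
    exact min_le_right _ _

theorem Set.ncard_biUnion_le_ncard_mul {W : Set ι} (hW : W.Finite) {s : ι → Set α} {m : ℕ}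
    (h : ∀ i ∈ W, (s i).ncard ≤ m) : (⋃ i ∈ W, s i).ncard ≤ W.ncard * m := by
  have := hW.toFinset.set_ncard_biUnion_le s
  simp only [Set.Finite.mem_toFinset] at this
  refine this.trans ((Finset.sum_le_card_nsmul _ _ m fun i hi ↦ h i (by simpa using hi)).trans ?_)
  rw [Set.ncard_eq_toFinset_card W hW, smul_eq_mul]

theorem Set.exists_notMem_of_ncard_lt {S : Set α} (h : S.ncard < Nat.card α) :
    ∃ x, x ∉ S := by
  by_contra! hS
  rw [Set.eq_univ_of_forall hS, Set.ncard_univ] at h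
  exact h.false

theorem Set.ne_and_notMem_of_ncard_insert_insert {a b : α} {D : Set α} {n : ℕ}
    (h : (insert a (insert b D)).ncard = n + 2) (hD : D.ncard ≤ n) :
    a ≠ b ∧ a ∉ D ∧ b ∉ D ∧ D.ncard = n := by
  have h₁ := Set.ncard_insert_le a (insert b D)
  have h₂ := Set.ncard_insert_le b D
  refine ⟨fun hab ↦ ?_, fun ha ↦ ?_, fun hb ↦ ?_, by omega⟩
  · rw [hab, Set.insert_eq_of_mem (Set.mem_insert b D)] at h
    omega
  · rw [Set.insert_eq_of_mem (Set.mem_insert_of_mem b ha)] at h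
    omega
  · rw [Set.insert_eq_of_mem hb] at h h₁
    omega

theorem Set.exists_pairwise_ne_mem_of_not_subset {A B C : Set α} (hBA : ¬ B ⊆ A)
    (hA : 1 < A.ncard) (hC : 1 < C.ncard) :
    ∃ a ∈ A, ∃ b ∈ B, ∃ c ∈ C, a ≠ b ∧ a ≠ c ∧ b ≠ c := by
  obtain ⟨b, hb, hbA⟩ := Set.not_subset.1 hBA
  obtain ⟨c, hc, hcb⟩ := Set.exists_ne_of_one_lt_ncard hC b
  obtain ⟨a, ha, hac⟩ := Set.exists_ne_of_one_lt_ncard hA c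
  exact ⟨a, ha, b, hb, c, hc, fun h ↦ hbA (h ▸ ha), hac, hcb.symm⟩

theorem Set.exists_pairwise_ne_mem_of_two_le_ncard {P₁ P₂ P₃ : Set α} (h₁ : 2 ≤ P₁.ncard)
    (h₂ : 2 ≤ P₂.ncard) (h₃ : 2 ≤ P₃.ncard) (h : ¬ (P₁ = P₂ ∧ P₂ = P₃ ∧ P₁.ncard = 2)) :
    ∃ x₁ ∈ P₁, ∃ x₂ ∈ P₂, ∃ x₃ ∈ P₃, x₁ ≠ x₂ ∧ x₁ ≠ x₃ ∧ x₂ ≠ x₃ := by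
  by_cases h₂₁ : P₂ ⊆ P₁
  swap
  · exact Set.exists_pairwise_ne_mem_of_not_subset h₂₁ h₁ h₃
  by_cases h₃₁ : P₃ ⊆ P₁
  swap
  · obtain ⟨a, ha, c, hc, b, hb, hac, hab, hcb⟩ :=
      Set.exists_pairwise_ne_mem_of_not_subset h₃₁ h₁ h₂
    exact ⟨a, ha, b, hb, c, hc, hab, hac, hcb.symm⟩
  by_cases h₁₂ : P₁ ⊆ P₂
  swap
  · obtain ⟨b, hb, a, ha, c, hc, hba, hbc, hac⟩ :=
      Set.exists_pairwise_ne_mem_of_not_subset h₁₂ h₂ h₃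
    exact ⟨a, ha, b, hb, c, hc, hba.symm, hac, hbc⟩
  by_cases h₁₃ : P₁ ⊆ P₃
  swap
  · obtain ⟨c, hc, a, ha, b, hb, hca, hcb, hab⟩ :=
      Set.exists_pairwise_ne_mem_of_not_subset h₁₃ h₃ h₂
    exact ⟨a, ha, b, hb, c, hc, hab, hca.symm, hcb.symm⟩
  have e₁₂ : P₁ = P₂ := h₁₂.antisymm h₂₁
  have e₁₃ : P₁ = P₃ := h₁₃.antisymm h₃₁
  have h₁' : 2 < P₁.ncard := lt_of_le_of_ne h₁ fun h' ↦ h ⟨e₁₂, e₁₂ ▸ e₁₃, h'.symm⟩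
  obtain ⟨x₁, hx₁⟩ := Set.nonempty_of_ncard_ne_zero (by omega : P₁.ncard ≠ 0)
  obtain ⟨x₂, hx₂, hx₂₁⟩ := Set.exists_ne_of_one_lt_ncard (s := P₂) (by omega) x₁
  obtain ⟨x₃, hx₃, hx₃'⟩ := Set.exists_mem_notMem_of_ncard_lt_ncard
    ((Set.ncard_pair hx₂₁.symm).trans_lt (e₁₃ ▸ h₁'))
  simp only [Set.mem_insert_iff, Set.mem_singleton_iff, not_or] at hx₃'
  exact ⟨x₁, hx₁, x₂, hx₂, x₃, hx₃, hx₂₁.symm, Ne.symm hx₃'.1, Ne.symm hx₃'.2⟩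

theorem min_le_ncard_image_sdiff_add [Finite V] {k : ℕ} {N T R : Set V} (c : V → α)
    (hTR : T ⊆ R) (h : min k (N \ T).ncard ≤ (c '' (N \ T)).ncard) :
    min k N.ncard ≤ (c '' (N \ R)).ncard + (N ∩ R).ncard := by
  have hsub : c '' (N \ T) ⊆ c '' (N \ R) ∪ c '' ((N ∩ R) \ T) := by
    rw [← Set.image_union]
    refine Set.image_mono fun x hx ↦ ?_
    by_cases hxR : x ∈ R
    exacts [Or.inr ⟨⟨hx.1, hxR⟩, hx.2⟩, Or.inl ⟨hx.1, hxR⟩]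
  have hNT : N ∩ R ∩ T = N ∩ T := by
    rw [Set.inter_assoc, Set.inter_eq_right.2 hTR]
  have h₁ := Set.ncard_le_ncard hsub
  have h₂ := Set.ncard_union_le (c '' (N \ R)) (c '' ((N ∩ R) \ T))
  have h₃ : (c '' ((N ∩ R) \ T)).ncard ≤ ((N ∩ R) \ T).ncard := Set.ncard_image_le
  have h₄ := Set.ncard_inter_add_ncard_sdiff_eq_ncard N T
  have h₅ := Set.ncard_inter_add_ncard_sdiff_eq_ncard (N ∩ R) T
  rw [hNT] at h₅
  omega

theorem IsWDColoring.of_isolate [Finite V] {G : SimpleGraph V} {T R : Set V} {k : ℕ}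
    {c c' : V → α} (hc : IsWDColoring (G.isolate T) k c) (hTR : T ⊆ R)
    (hcc' : ∀ x ∉ R, c' x = c x)
    (hT : ∀ v ∈ T, min k (deg G v) ≤ (c' '' G.neighborSet v).ncard)
    (hout : ∀ w ∉ T, (G.neighborSet w ∩ R).InjOn c' ∧
      Disjoint (c' '' (G.neighborSet w ∩ R)) (blockedColors k (c '' (G.neighborSet w \ R)))) :
    IsWDColoring G k c' := by
  intro w
  by_cases hw : w ∈ T
  · exact hT w hw
  obtain ⟨hinj, hdisj⟩ := hout w hw
  have hcw := hc w
  rw [deg, SimpleGraph.neighborSet_isolate hw] at hcw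
  have hsplit :
      c' '' G.neighborSet w = c '' (G.neighborSet w \ R) ∪ c' '' (G.neighborSet w ∩ R) := by
    rw [← Set.image_congr fun x hx ↦ hcc' x hx.2, ← Set.image_union, Set.sdiff_union_inter]
  calc min k (deg G w)
      ≤ min k ((c '' (G.neighborSet w \ R)).ncard + (c' '' (G.neighborSet w ∩ R)).ncard) := by
        rw [hinj.ncard_image]
        exact le_min (min_le_left _ _) (min_le_ncard_image_sdiff_add c hTR hcw)
    _ ≤ (c' '' G.neighborSet w).ncard := by
        rw [hsplit]
        exact min_le_ncard_union_of_disjoint_blockedColors hdisj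

theorem IsWDColoring.update [Finite V] [DecidableEq V] {G : SimpleGraph V} {k : ℕ} {c : V → α}
    (hc : IsWDColoring G k c) {u : V} {z : α}
    (hz : ∀ w ∈ G.neighborSet u, z ∉ blockedColors k (c '' (G.neighborSet w \ {u}))) :
    IsWDColoring G k (Function.update c u z) := by
  rw [← G.isolate_empty] at hc
  refine hc.of_isolate (Set.empty_subset {u}) (fun x hx ↦ Function.update_of_ne hx _ _)
    (fun v hv ↦ hv.elim) fun w _ ↦
      ⟨(Set.subsingleton_singleton.anti Set.inter_subset_right).injOn _, ?_⟩
  rw [Set.disjoint_left]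
  rintro _ ⟨y, ⟨hy, rfl : y = u⟩, rfl⟩
  rw [Function.update_self]
  exact hz w (G.adj_symm hy)

theorem IsWDColoring.exists_update_notMem [Finite V] [DecidableEq V] {G : SimpleGraph V} {k n : ℕ}
    {c : V → Fin n} (hc : IsWDColoring G k c) (u : V) (F : Set (Fin n))
    (hn : F.ncard + (G.neighborSet u).ncard * (k - 1) < n) :
    ∃ z ∉ F, IsWDColoring G k (Function.update c u z) := by
  set B := ⋃ w ∈ G.neighborSet u, blockedColors k (c '' (G.neighborSet w \ {u}))
  have hB : B.ncard ≤ (G.neighborSet u).ncard * (k - 1) :=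
    Set.ncard_biUnion_le_ncard_mul (Set.toFinite _) fun w _ ↦ ncard_blockedColors_le k _
  obtain ⟨z, hz⟩ := Set.exists_notMem_of_ncard_lt (S := F ∪ B)
    (by have := Set.ncard_union_le F B; rw [Nat.card_fin]; omega)
  rw [Set.mem_union, not_or] at hz
  exact ⟨z, hz.1, hc.update fun w hw hzw ↦ hz.2 (Set.mem_biUnion hw hzw)⟩

namespace SimpleGraph

structure DegThreeTriangle (G : SimpleGraph V) where
  (v₁ v₂ v₃ u₁ u₂ u₃ : V)
  neighborSet_v₁ : G.neighborSet v₁ = {v₂, v₃, u₁}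
  neighborSet_v₂ : G.neighborSet v₂ = {v₁, v₃, u₂}
  neighborSet_v₃ : G.neighborSet v₃ = {v₁, v₂, u₃}
  u₁_notMem : u₁ ∉ ({v₁, v₂, v₃} : Set V)
  u₂_notMem : u₂ ∉ ({v₁, v₂, v₃} : Set V)
  u₃_notMem : u₃ ∉ ({v₁, v₂, v₃} : Set V)

namespace DegThreeTriangle

variable {G : SimpleGraph V} (t : G.DegThreeTriangle)

def verts : Set V := {t.v₁, t.v₂, t.v₃}

def blocked (c : V → α) (u : V) : Set α :=
  blockedColors 3 (c '' (G.neighborSet u \ t.verts))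

theorem adj₁₂ : G.Adj t.v₁ t.v₂ := by
  rw [← mem_neighborSet, t.neighborSet_v₁]; simp

theorem adj₁₃ : G.Adj t.v₁ t.v₃ := by
  rw [← mem_neighborSet, t.neighborSet_v₁]; simp

theorem adj₂₃ : G.Adj t.v₂ t.v₃ := by
  rw [← mem_neighborSet, t.neighborSet_v₂]; simp

theorem eq_of_adj {w y : V} (hw : w ∉ t.verts) (hy : y ∈ t.verts) (h : G.Adj y w) :
    y = t.v₁ ∧ w = t.u₁ ∨ y = t.v₂ ∧ w = t.u₂ ∨ y = t.v₃ ∧ w = t.u₃ := by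
  simp only [verts, Set.mem_insert_iff, Set.mem_singleton_iff, not_or] at hw hy
  rw [← mem_neighborSet] at h
  rcases hy with rfl | rfl | rfl
  · rw [t.neighborSet_v₁] at h; simp_all
  · rw [t.neighborSet_v₂] at h; simp_all
  · rw [t.neighborSet_v₃] at h; simp_all

theorem not_adj_of_notMem_blocked {c : V → α} {u w : V} (hne : (t.blocked c u).Nonempty)
    (hw : w ∉ t.verts) (h : c w ∉ t.blocked c u) : ¬ G.Adj u w :=
  fun hadj ↦ h (mem_blockedColors_of_nonempty hne ⟨w, ⟨hadj, hw⟩, rfl⟩)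

theorem blocked_update_of_not_adj [DecidableEq V] {c : V → α} {u w : V} {z : α}
    (h : ¬ G.Adj u w) : t.blocked (Function.update c w z) u = t.blocked c u := by
  unfold blocked
  rw [Set.image_congr fun x hx ↦ Function.update_of_ne (f := c) (by rintro rfl; exact h hx.1) z]

section recolor

variable [DecidableEq V]

def recolor (c : V → α) (x₁ x₂ x₃ : α) : V → α :=
  Function.update (Function.update (Function.update c t.v₃ x₃) t.v₂ x₂) t.v₁ x₁

variable {c : V → α} {x₁ x₂ x₃ : α}

@[simp] theorem recolor_v₁ : t.recolor c x₁ x₂ x₃ t.v₁ = x₁ := by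
  simp [recolor]

@[simp] theorem recolor_v₂ : t.recolor c x₁ x₂ x₃ t.v₂ = x₂ := by
  simp [recolor, t.adj₁₂.ne.symm]

@[simp] theorem recolor_v₃ : t.recolor c x₁ x₂ x₃ t.v₃ = x₃ := by
  simp [recolor, t.adj₁₃.ne.symm, t.adj₂₃.ne.symm]

theorem recolor_of_notMem {w : V} (hw : w ∉ t.verts) : t.recolor c x₁ x₂ x₃ w = c w := by
  simp only [verts, Set.mem_insert_iff, Set.mem_singleton_iff, not_or] at hw
  simp [recolor, hw.1, hw.2.1, hw.2.2]

theorem isWDColoring_recolor [Finite V] (hc : IsWDColoring (G.isolate t.verts) 3 c)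
    (h₁₂ : x₁ ≠ x₂) (h₁₃ : x₁ ≠ x₃) (h₂₃ : x₂ ≠ x₃)
    (hx₁ : x₁ ∉ insert (c t.u₂) (insert (c t.u₃) (t.blocked c t.u₁)))
    (hx₂ : x₂ ∉ insert (c t.u₁) (insert (c t.u₃) (t.blocked c t.u₂)))
    (hx₃ : x₃ ∉ insert (c t.u₁) (insert (c t.u₂) (t.blocked c t.u₃))) :
    IsWDColoring G 3 (t.recolor c x₁ x₂ x₃) := by
  simp only [Set.mem_insert_iff, not_or] at hx₁ hx₂ hx₃
  have hu₁ := t.recolor_of_notMem (c := c) (x₁ := x₁) (x₂ := x₂) (x₃ := x₃) t.u₁_notMem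
  have hu₂ := t.recolor_of_notMem (c := c) (x₁ := x₁) (x₂ := x₂) (x₃ := x₃) t.u₂_notMem
  have hu₃ := t.recolor_of_notMem (c := c) (x₁ := x₁) (x₂ := x₂) (x₃ := x₃) t.u₃_notMem
  refine hc.of_isolate subset_rfl (fun x hx ↦ t.recolor_of_notMem hx) ?_ fun w hw ↦ ⟨?_, ?_⟩
  · rintro v (rfl | rfl | rfl)
    · exact min_le_ncard_image_of_neighborSet_eq t.neighborSet_v₁ (by simpa using h₂₃)
        (by simpa [hu₁] using hx₂.1) (by simpa [hu₁] using hx₃.1)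
    · exact min_le_ncard_image_of_neighborSet_eq t.neighborSet_v₂ (by simpa using h₁₃)
        (by simpa [hu₂] using hx₁.1) (by simpa [hu₂] using hx₃.2.1)
    · exact min_le_ncard_image_of_neighborSet_eq t.neighborSet_v₃ (by simpa using h₁₂)
        (by simpa [hu₃] using hx₁.2.1) (by simpa [hu₃] using hx₂.2.1)
  · rintro y ⟨-, hy⟩ y' ⟨-, hy'⟩ h
    rcases hy with rfl | rfl | rfl <;> rcases hy' with rfl | rfl | rfl <;> simp_all
  · rw [Set.disjoint_left]
    rintro _ ⟨y, ⟨hyw, hy⟩, rfl⟩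
    rcases t.eq_of_adj hw hy (G.adj_symm hyw) with ⟨rfl, rfl⟩ | ⟨rfl, rfl⟩ | ⟨rfl, rfl⟩
    · simpa [blocked] using hx₁.2.2
    · simpa [blocked] using hx₂.2.2
    · simpa [blocked] using hx₃.2.2

end recolor

theorem wdColorable_of_not_adj_u₃ [Finite V] {c : V → Fin 6}
    (hc : IsWDColoring (G.isolate t.verts) 3 c) (hu₁₃ : ¬ G.Adj t.u₁ t.u₃)
    (hu₂₃ : ¬ G.Adj t.u₂ t.u₃) (hz₁₃ : c t.u₁ ≠ c t.u₃) (hz₂₃ : c t.u₂ ≠ c t.u₃)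
    (h₁ : c t.u₃ ∉ t.blocked c t.u₁) (hne₃ : (t.blocked c t.u₃).Nonempty)
    {P : Set (Fin 6)} (hP : 1 < P.ncard)
    (hP₂ : ∀ x ∈ P, x ∉ insert (c t.u₁) (insert (c t.u₃) (t.blocked c t.u₂)))
    (hP₃ : ∀ x ∈ P, x ∉ insert (c t.u₁) (insert (c t.u₂) (t.blocked c t.u₃))) :
    WDColorable G 3 6 := by
  classical
  have hdeg : ((G.isolate t.verts).neighborSet t.u₃).ncard ≤ 2 := by
    have h := hc t.u₃
    have := ncard_lt_of_blockedColors_nonempty hne₃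
    rw [deg, neighborSet_isolate (T := t.verts) t.u₃_notMem] at h
    rw [neighborSet_isolate (T := t.verts) t.u₃_notMem]
    omega
  -- Recoloring `u₃` frees its old color for `v₁`.
  obtain ⟨z, hz, hcz⟩ := hc.exists_update_notMem t.u₃ {c t.u₃}
    (by rw [Set.ncard_singleton]; omega)
  obtain ⟨x₂, hx₂, hx₂z⟩ := Set.exists_ne_of_one_lt_ncard hP z
  obtain ⟨x₃, hx₃, hx₃₂⟩ := Set.exists_ne_of_one_lt_ncard hP x₂
  have hu₁ : Function.update c t.u₃ z t.u₁ = c t.u₁ :=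
    Function.update_of_ne (fun h ↦ hz₁₃ (congrArg c h)) _ _
  have hu₂ : Function.update c t.u₃ z t.u₂ = c t.u₂ :=
    Function.update_of_ne (fun h ↦ hz₂₃ (congrArg c h)) _ _
  have hx₂' := hP₂ x₂ hx₂
  have hx₃' := hP₂ x₃ hx₃
  have hx₃'' := hP₃ x₃ hx₃
  simp only [Set.mem_insert_iff, not_or] at hx₂' hx₃' hx₃'' hz
  refine ⟨_, t.isWDColoring_recolor hcz (x₁ := c t.u₃) (Ne.symm hx₂'.2.1) (Ne.symm hx₃'.2.1)
    hx₃₂.symm ?_ ?_ ?_⟩ <;>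
  simp only [Set.mem_insert_iff, not_or, Function.update_self, hu₁, hu₂,
    t.blocked_update_of_not_adj hu₁₃, t.blocked_update_of_not_adj hu₂₃,
    t.blocked_update_of_not_adj (G.loopless.irrefl t.u₃)]
  exacts [⟨hz₂₃.symm, Ne.symm hz, h₁⟩, ⟨hx₂'.1, hx₂z, hx₂'.2.2⟩, hx₃'']

theorem wdColorable [Finite V] {c : V → Fin 6} (hc : IsWDColoring (G.isolate t.verts) 3 c) :
    WDColorable G 3 6 := by
  classical
  set B₁ := insert (c t.u₂) (insert (c t.u₃) (t.blocked c t.u₁))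
  set B₂ := insert (c t.u₁) (insert (c t.u₃) (t.blocked c t.u₂))
  set B₃ := insert (c t.u₁) (insert (c t.u₂) (t.blocked c t.u₃))
  have hcompl (B : Set (Fin 6)) : B.ncard + Bᶜ.ncard = 6 := by
    simpa using Set.ncard_add_ncard_compl B
  have hle (a b u : V) : (insert (c a) (insert (c b) (t.blocked c u))).ncard ≤ 4 := by
    have := Set.ncard_insert_le (c a) (insert (c b) (t.blocked c u))
    have := Set.ncard_insert_le (c b) (t.blocked c u)
    have := ncard_blockedColors_le 3 (c '' (G.neighborSet u \ t.verts))
    unfold blocked at *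
    omega
  by_cases hP : B₁ᶜ = B₂ᶜ ∧ B₂ᶜ = B₃ᶜ ∧ B₁ᶜ.ncard = 2
  · obtain ⟨e₁₂, e₂₃, hP⟩ := hP
    rw [compl_inj_iff] at e₁₂ e₂₃
    have h₁ : B₁.ncard = 2 + 2 := by have := hcompl B₁; omega
    have h₂ : B₂.ncard = 2 + 2 := e₁₂ ▸ h₁
    have h₃ : B₃.ncard = 2 + 2 := e₂₃ ▸ h₂
    obtain ⟨hz₂₃, -, hz₃, hD₁⟩ :=
      Set.ne_and_notMem_of_ncard_insert_insert h₁ (ncard_blockedColors_le 3 _)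
    obtain ⟨hz₁₃, -, hz₃', hD₂⟩ :=
      Set.ne_and_notMem_of_ncard_insert_insert h₂ (ncard_blockedColors_le 3 _)
    obtain ⟨-, -, -, hD₃⟩ :=
      Set.ne_and_notMem_of_ncard_insert_insert h₃ (ncard_blockedColors_le 3 _)
    have hne (u : V) (hD : (t.blocked c u).ncard = 2) : (t.blocked c u).Nonempty :=
      Set.nonempty_of_ncard_ne_zero (by omega)
    exact t.wdColorable_of_not_adj_u₃ hc
      (t.not_adj_of_notMem_blocked (hne _ hD₁) t.u₃_notMem hz₃)
      (t.not_adj_of_notMem_blocked (hne _ hD₂) t.u₃_notMem hz₃') hz₁₃ hz₂₃ hz₃ (hne _ hD₃)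
      (P := B₁ᶜ) (by omega) (fun x hx ↦ show x ∉ B₂ from e₁₂ ▸ hx)
      (fun x hx ↦ show x ∉ B₃ from e₂₃ ▸ e₁₂ ▸ hx)
  · have h₂ (B : Set (Fin 6)) (hB : B.ncard ≤ 4) : 2 ≤ Bᶜ.ncard := by
      have := hcompl B; omega
    obtain ⟨x₁, hx₁, x₂, hx₂, x₃, hx₃, h₁₂, h₁₃, h₂₃⟩ := Set.exists_pairwise_ne_mem_of_two_le_ncard
      (h₂ _ (hle _ _ _)) (h₂ _ (hle _ _ _)) (h₂ _ (hle _ _ _)) hP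
    exact ⟨_, t.isWDColoring_recolor hc h₁₂ h₁₃ h₂₃ hx₁ hx₂ hx₃⟩

end DegThreeTriangle

end SimpleGraph

theorem minCounterexample_no_deg3_triangle_general {V : Type} [Fintype V] (G : SimpleGraph V)
    (hplanar : IsPlanar G) (hcex : ¬ WDColorable G 3 6)
    (hminEdges : ∀ (W : Type) [Fintype W] (H : SimpleGraph W),
      IsPlanar H → H.edgeSet.ncard < G.edgeSet.ncard → WDColorable H 3 6) :
    ¬ ∃ v₁ v₂ v₃ : V,
      G.Adj v₁ v₂ ∧ G.Adj v₂ v₃ ∧ G.Adj v₁ v₃ ∧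
      deg G v₁ = 3 ∧ deg G v₂ = 3 ∧ deg G v₃ = 3 := by
  rintro ⟨v₁, v₂, v₃, h₁₂, h₂₃, h₁₃, hd₁, hd₂, hd₃⟩
  obtain ⟨u₁, hu₁₂, hu₁₃, hN₁⟩ := exists_neighborSet_eq_of_deg_eq_three hd₁ h₁₂ h₁₃ h₂₃.ne
  obtain ⟨u₂, hu₂₁, hu₂₃, hN₂⟩ :=
    exists_neighborSet_eq_of_deg_eq_three hd₂ h₁₂.symm h₂₃ h₁₃.ne
  obtain ⟨u₃, hu₃₁, hu₃₂, hN₃⟩ :=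
    exists_neighborSet_eq_of_deg_eq_three hd₃ h₁₃.symm h₂₃.symm h₁₂.ne
  have hu₁ : G.Adj v₁ u₁ := by rw [← mem_neighborSet, hN₁]; simp
  have hu₂ : G.Adj v₂ u₂ := by rw [← mem_neighborSet, hN₂]; simp
  have hu₃ : G.Adj v₃ u₃ := by rw [← mem_neighborSet, hN₃]; simp
  let t : G.DegThreeTriangle := ⟨v₁, v₂, v₃, u₁, u₂, u₃, hN₁, hN₂, hN₃,
    by simp [hu₁.ne.symm, hu₁₂, hu₁₃], by simp [hu₂.ne.symm, hu₂₁, hu₂₃],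
    by simp [hu₃.ne.symm, hu₃₁, hu₃₂]⟩
  obtain ⟨c, hc⟩ := hminEdges V (G.isolate t.verts) (hplanar.anti isolate_le)
    (ncard_edgeSet_isolate_lt h₁₂ (by simp [t, DegThreeTriangle.verts]))
  exact hcex (t.wdColorable hc)

/-- A minimal counterexample contains no triangle all of whose vertices have degree 3. -/
theorem minCounterexample_no_deg3_triangle {V : Type} [Fintype V] (G : SimpleGraph V)
    (hplanar : IsPlanar G) (hcex : ¬ WDColorable G 3 6)
    (hminEdges : ∀ (W : Type) [Fintype W] (H : SimpleGraph W),
      IsPlanar H → H.edgeSet.ncard < G.edgeSet.ncard → WDColorable H 3 6)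
    (hminVerts : ∀ (W : Type) [Fintype W] (H : SimpleGraph W),
      IsPlanar H → ¬ WDColorable H 3 6 → H.edgeSet.ncard = G.edgeSet.ncard →
      Nat.card V ≤ Nat.card W) :
    ¬ ∃ v₁ v₂ v₃ : V,
      G.Adj v₁ v₂ ∧ G.Adj v₂ v₃ ∧ G.Adj v₁ v₃ ∧
      deg G v₁ = 3 ∧ deg G v₂ = 3 ∧ deg G v₃ = 3 :=
  minCounterexample_no_deg3_triangle_general G hplanar hcex hminEdges
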